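/- Let 1 < γ < 2 and κ > 0, and define F(y) = γ κ^γ y^γ ∫_{κ y}^∞ s^{−γ−1} e^{−s} ds for y > 0. Then, with n = κγ/(γ−1) and ρ = κ^γ γ Γ(−γ) (Γ the Gamma function, which is defined and finite at −γ since γ is not an integer), the function F admits the expansion F(y) = 1 − n y + ρ y^γ + O(y²) as y → 0⁺. -/

import Mathlib

/-!
With `x = κ y` we have `F(y) = γ x^γ Γ(-γ, x)`, where `Γ(a, x) = ∫ₓ^∞ e^{-s} s^{a-1} ds`.
Integrating by parts twice, `Γ(a + 1, x) = a Γ(a, x) + x^a e^{-x}`, reduces `Γ(-γ, x)` to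
`Γ(2 - γ, x) = Γ(2 - γ) - g(x)` with `g(x) = ∫₀ˣ e^{-s} s^{1-γ} ds ≤ x^{2-γ} / (2 - γ)`, and
`Γ(2 - γ) = γ (γ - 1) Γ(-γ)`. This gives exactly
`F(y) = e^{-x} - x e^{-x} / (γ - 1) + ρ y^γ - x^γ g(x) / (γ - 1)`, and the three remainders
`e^{-x} - 1 + x`, `x (1 - e^{-x})` and `x^γ g(x)` are all `O(x²)`.
-/

open MeasureTheory Asymptotics Filter Set Real Topology

noncomputable def upperIncompleteGamma (a x : ℝ) : ℝ := ∫ s in Ioi x, exp (-s) * s ^ (a - 1)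

noncomputable def lowerIncompleteGamma (a x : ℝ) : ℝ := ∫ s in Ioc 0 x, exp (-s) * s ^ (a - 1)

lemma hasDerivAt_exp_neg_mul_rpow (a : ℝ) {s : ℝ} (hs : 0 < s) :
    HasDerivAt (fun t ↦ exp (-t) * t ^ a) (exp (-s) * (a * s ^ (a - 1)) - exp (-s) * s ^ a) s := by
  have hexp : HasDerivAt (fun t ↦ exp (-t)) (-exp (-s)) s := by
    simpa using (hasDerivAt_neg s).exp
  exact (hexp.mul (hasDerivAt_rpow_const (p := a) (Or.inl hs.ne'))).congr_deriv (by ring)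

lemma integrableOn_exp_neg_mul_rpow_Ioi (a : ℝ) {x : ℝ} (hx : 0 < x) :
    IntegrableOn (fun s ↦ exp (-s) * s ^ a) (Ioi x) :=
  integrable_of_isBigO_exp_neg one_half_pos
    (fun s hs ↦ (continuous_exp.comp continuous_neg).continuousAt.continuousWithinAt.mul
      (continuousAt_rpow_const s a (Or.inl (hx.trans_le hs).ne')).continuousWithinAt)
    (Gamma_integrand_isLittleO a).isBigO

/-- Integration by parts, valid for every real `a` since the lower limit is positive. -/
lemma upperIncompleteGamma_add_one (a : ℝ) {x : ℝ} (hx : 0 < x) :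
    upperIncompleteGamma (a + 1) x = a * upperIncompleteGamma a x + exp (-x) * x ^ a := by
  have hparts : ∫ s in Ioi x, (exp (-s) * s ^ a - a * (exp (-s) * s ^ (a - 1)) : ℝ) =
      (0 : ℝ) - -(exp (-x) * x ^ a) := by
    refine integral_Ioi_of_hasDerivAt_of_tendsto' (f := fun t ↦ -(exp (-t) * t ^ a))
      (fun s hs ↦ ?_) ?_ ?_
    · exact (hasDerivAt_exp_neg_mul_rpow a (hx.trans_le hs)).neg.congr_deriv (by ring)
    · exact (integrableOn_exp_neg_mul_rpow_Ioi a hx).sub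
        ((integrableOn_exp_neg_mul_rpow_Ioi (a - 1) hx).const_mul a)
    · simpa [mul_comm] using (tendsto_rpow_mul_exp_neg_mul_atTop_nhds_zero a 1 one_pos).neg
  rw [integral_sub (integrableOn_exp_neg_mul_rpow_Ioi a hx)
    ((integrableOn_exp_neg_mul_rpow_Ioi (a - 1) hx).const_mul a), integral_const_mul] at hparts
  rw [upperIncompleteGamma, upperIncompleteGamma, add_sub_cancel_right]
  linarith

lemma lowerIncompleteGamma_add_upperIncompleteGamma {a x : ℝ} (ha : 0 < a) (hx : 0 ≤ x) :
    lowerIncompleteGamma a x + upperIncompleteGamma a x = Gamma a := by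
  have hint := GammaIntegral_convergent ha
  rw [lowerIncompleteGamma, upperIncompleteGamma, Gamma_eq_integral ha,
    ← setIntegral_union (Ioc_disjoint_Ioi le_rfl) measurableSet_Ioi
      (hint.mono_set Ioc_subset_Ioi_self) (hint.mono_set (Ioi_subset_Ioi hx)),
    Ioc_union_Ioi_eq_Ioi hx]

lemma lowerIncompleteGamma_nonneg (a x : ℝ) : 0 ≤ lowerIncompleteGamma a x :=
  setIntegral_nonneg measurableSet_Ioc fun s hs ↦ by have := hs.1; positivity

lemma lowerIncompleteGamma_le {a x : ℝ} (ha : 0 < a) (hx : 0 ≤ x) :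
    lowerIncompleteGamma a x ≤ x ^ a / a := by
  have hpow : IntegrableOn (fun s : ℝ ↦ s ^ (a - 1)) (Ioc 0 x) :=
    (intervalIntegrable_iff_integrableOn_Ioc_of_le hx).mp
      (intervalIntegral.intervalIntegrable_rpow' (by linarith))
  calc lowerIncompleteGamma a x
      ≤ ∫ s in Ioc 0 x, s ^ (a - 1) :=
        setIntegral_mono_on ((GammaIntegral_convergent ha).mono_set Ioc_subset_Ioi_self) hpow
          measurableSet_Ioc fun s hs ↦
            mul_le_of_le_one_left (rpow_nonneg hs.1.le _) (exp_le_one_iff.mpr (by linarith [hs.1]))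
    _ = x ^ a / a := by
        rw [← intervalIntegral.integral_of_le hx, integral_rpow (Or.inl (by linarith)),
          sub_add_cancel, zero_rpow ha.ne']
        ring

lemma rpow_mul_upperIncompleteGamma_neg {γ x : ℝ} (hγ₀ : γ ≠ 0) (hγ₁ : γ ≠ 1) (hγ₂ : γ < 2)
    (hx : 0 < x) :
    γ * x ^ γ * upperIncompleteGamma (-γ) x = exp (-x) - x * exp (-x) / (γ - 1)
      + γ * Gamma (-γ) * x ^ γ - x ^ γ * lowerIncompleteGamma (2 - γ) x / (γ - 1) := by
  have hstep₁ := upperIncompleteGamma_add_one (-γ) hx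
  have hstep₂ := upperIncompleteGamma_add_one (-γ + 1) hx
  have hsplit := lowerIncompleteGamma_add_upperIncompleteGamma (a := 2 - γ) (by linarith) hx.le
  have hGamma : Gamma (2 - γ) = (-γ + 1) * (-γ) * Gamma (-γ) := by
    rw [show 2 - γ = -γ + 1 + 1 by ring, Gamma_add_one (by contrapose! hγ₁; linarith),
      Gamma_add_one (neg_ne_zero.mpr hγ₀), mul_assoc]
  have hpow₀ : x ^ γ * x ^ (-γ) = 1 := by rw [← rpow_add hx, add_neg_cancel, rpow_zero]
  have hpow₁ : x ^ γ * x ^ (-γ + 1) = x := by rw [← rpow_add hx, add_neg_cancel_left, rpow_one]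
  rw [show -γ + 1 + 1 = 2 - γ by ring] at hstep₂
  have hγ₁' : γ - 1 ≠ 0 := sub_ne_zero.mpr hγ₁
  field_simp
  linear_combination x ^ γ * hsplit + x ^ γ * hGamma - x ^ γ * hstep₂ - exp (-x) * hpow₁
    + (γ - 1) * x ^ γ * hstep₁ + (γ - 1) * exp (-x) * hpow₀

lemma isBigO_exp_neg_sub_one_add_self :
    (fun x ↦ exp (-x) - 1 + x) =O[𝓝 0] (fun x ↦ x ^ 2) := by
  have h := (exp_sub_sum_range_isBigO_pow 2).comp_tendsto (continuous_neg.tendsto' 0 0 neg_zero)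
  simp only [Function.comp_def, Finset.sum_range_succ, Finset.sum_range_zero, Nat.factorial,
    Nat.cast_one, even_two, Even.neg_pow] at h
  exact h.congr_left fun x ↦ by ring

lemma isBigO_self_mul_one_sub_exp_neg :
    (fun x ↦ x * (1 - exp (-x))) =O[𝓝 0] (fun x ↦ x ^ 2) := by
  have h := (exp_sub_sum_range_isBigO_pow 1).comp_tendsto (continuous_neg.tendsto' 0 0 neg_zero)
  simp only [Function.comp_def, Finset.sum_range_one, Nat.factorial_zero, Nat.cast_one, pow_zero,
    div_one, pow_one] at h
  exact ((isBigO_refl (fun x ↦ x) _).mul h).neg_left.neg_right.congr (fun x ↦ by ring)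
    (fun x ↦ by ring)

lemma lowerIncompleteGamma_isBigO_rpow {a : ℝ} (ha : 0 < a) :
    lowerIncompleteGamma a =O[𝓝[>] 0] (fun x ↦ x ^ a) := by
  refine IsBigO.of_bound (1 / a) ?_
  filter_upwards [self_mem_nhdsWithin] with x (hx : 0 < x)
  rw [norm_of_nonneg (lowerIncompleteGamma_nonneg a x), norm_of_nonneg (by positivity)]
  calc lowerIncompleteGamma a x ≤ x ^ a / a := lowerIncompleteGamma_le ha hx.le
    _ = 1 / a * x ^ a := by ring

lemma isBigO_rpow_mul_upperIncompleteGamma_neg {γ : ℝ} (hγ₁ : 1 < γ) (hγ₂ : γ < 2) :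
    (fun x ↦ γ * x ^ γ * upperIncompleteGamma (-γ) x
        - (1 - γ / (γ - 1) * x + γ * Gamma (-γ) * x ^ γ)) =O[𝓝[>] 0] (fun x ↦ x ^ 2) := by
  have hlower : (fun x ↦ x ^ γ * lowerIncompleteGamma (2 - γ) x) =O[𝓝[>] 0] (fun x ↦ x ^ 2) := by
    refine ((isBigO_refl _ _).mul (lowerIncompleteGamma_isBigO_rpow (by linarith))).congr'
      EventuallyEq.rfl ?_
    filter_upwards [self_mem_nhdsWithin] with x (hx : 0 < x)
    rw [← rpow_add hx, add_sub_cancel, rpow_two]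
  have hsum := ((isBigO_exp_neg_sub_one_add_self.mono nhdsWithin_le_nhds).add
    ((isBigO_self_mul_one_sub_exp_neg.mono nhdsWithin_le_nhds).const_mul_left (1 / (γ - 1)))).sub
    (hlower.const_mul_left (1 / (γ - 1)))
  refine hsum.congr' ?_ EventuallyEq.rfl
  filter_upwards [self_mem_nhdsWithin] with x (hx : 0 < x)
  rw [rpow_mul_upperIncompleteGamma_neg (by linarith) hγ₁.ne' hγ₂ hx]
  field_simp [sub_ne_zero.mpr hγ₁.ne']
  ring

theorem gpf_algebraic_expansion
    (γ κ : ℝ) (hγ : 1 < γ) (hγ' : γ < 2) (hκ : 0 < κ)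
    (F : ℝ → ℝ)
    (hF : ∀ y > (0 : ℝ),
      F y = γ * κ ^ γ * y ^ γ * ∫ s in Set.Ioi (κ * y), s ^ (-γ - 1) * Real.exp (-s))
    (n ρ : ℝ) (hn : n = κ * γ / (γ - 1)) (hρ : ρ = κ ^ γ * γ * Real.Gamma (-γ)) :
    (fun y => F y - (1 - n * y + ρ * y ^ γ)) =O[nhdsWithin 0 (Set.Ioi 0)]
      (fun y => y ^ 2) := by
  have hscale : Tendsto (κ * ·) (𝓝[>] 0) (𝓝[>] 0) :=
    tendsto_iff_comap.mpr (comap_mulLeft_nhdsGT_zero hκ).ge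
  have hsq : (fun y ↦ (κ * y) ^ 2) =O[𝓝[>] 0] (fun y ↦ y ^ 2) := by
    simpa only [mul_pow] using (isBigO_refl _ _).const_mul_left (κ ^ 2)
  refine (((isBigO_rpow_mul_upperIncompleteGamma_neg hγ hγ').comp_tendsto hscale).trans
    hsq).congr' ?_ EventuallyEq.rfl
  filter_upwards [self_mem_nhdsWithin] with y (hy : 0 < y)
  simp only [Function.comp_apply, upperIncompleteGamma, mul_comm (exp _)]
  rw [hF y hy, hn, hρ, mul_rpow hκ.le hy.le]
  field_simp [sub_ne_zero.mpr hγ.ne']
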